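/- arXiv:2106.05471 — 3 statements merged into one kernel-verified Lean document; each statement's English description precedes it below -/
import Mathlib

section
/- Let W be a finite irreducible Coxeter group with a fixed Coxeter element c. For every w in W: (1) c pi_T(w,c) c^{-1} = pi_T(c w c^{-1}, c), and (2) c Pop_T(w,c) c^{-1} = Pop_T(c w c^{-1}, c); that is, pi_T and Pop_T are equivariant with respect to conjugation by c. -/
/-!
Common definitions: reflection length (absolute length) with respect to a set `R` of
"reflections" in a group, the absolute order, joins in the noncrossing partition lattice
`NC(W,c) = [1,c]`, the noncrossing projection `piT`, and the pop-tsack torsing operator `popT`.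
-/

namespace PopTsack

variable {G : Type*} [Group G]

open scoped Classical

/-- The reflection length of `w` with respect to the set `R` of reflections:
the least `r` such that `w` is a product of `r` elements of `R`. -/
noncomputable def absLength (R : Set G) (w : G) : ℕ :=
  sInf {r : ℕ | ∃ l : List G, l.length = r ∧ (∀ t ∈ l, t ∈ R) ∧ l.prod = w}

/-- The absolute order: `v ≤_T w` iff `ℓ_T v + ℓ_T (w v⁻¹) = ℓ_T w`. -/
def absLe (R : Set G) (v w : G) : Prop :=
  absLength R v + absLength R (w * v⁻¹) = absLength R w

/-- `p` is the join, in the noncrossing partition lattice `NC(G,c)` (the interval `[1,c]`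
in absolute order), of the set `A ⊆ NC(G,c)`. -/
def IsNCJoin (R : Set G) (c : G) (A : Set G) (p : G) : Prop :=
  absLe R p c ∧ (∀ a ∈ A, absLe R a p) ∧
    ∀ q : G, absLe R q c → (∀ a ∈ A, absLe R a q) → absLe R p q

/-- The noncrossing projection `π_T(w,c)`: the join in `NC(G,c)` of the set of reflections
lying weakly below `w` in absolute order.  (By Brady–Watt, `NC(G,c)` is a lattice when `G` is a
finite Coxeter group and `c` a Coxeter element, so this join exists; the value is defined by
choice and defaults to `1` in the degenerate case where no join exists.) -/
noncomputable def piT (R : Set G) (c w : G) : G :=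
  if h : ∃ p : G, IsNCJoin R c {t | t ∈ R ∧ absLe R t w} p then h.choose else 1

/-- The Coxeter pop-tsack torsing operator `Pop_T(w,c) = w ⬝ π_T(w,c)⁻¹`. -/
noncomputable def popT (R : Set G) (c w : G) : G := w * (piT R c w)⁻¹

end PopTsack

/-- The set of reflections of a Coxeter system: all conjugates of the simple reflections. -/
def CoxeterSystem.reflections {B W : Type*} [Group W] {M : CoxeterMatrix B}
    (cs : CoxeterSystem M W) : Set W :=
  {t | ∃ (w : W) (i : B), t = w * cs.simple i * w⁻¹}

/-- A (standard) Coxeter element: the product of all the simple reflections, each occurring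
exactly once, in some order. -/
def CoxeterSystem.IsCoxeterElement {B W : Type*} [Group W] {M : CoxeterMatrix B}
    (cs : CoxeterSystem M W) (c : W) : Prop :=
  ∃ l : List B, l.Nodup ∧ (∀ i : B, i ∈ l) ∧ c = (l.map cs.simple).prod

/-- A Coxeter matrix is irreducible if its Coxeter diagram is connected: the index set cannot be
split into two nonempty parts all of whose mutual entries are `2`. -/
def CoxeterMatrix.IsIrreducible {B : Type*} (M : CoxeterMatrix B) : Prop :=
  ∀ A : Set B, (∀ a ∈ A, ∀ b ∉ A, M a b = 2) → A = ∅ ∨ A = Set.univ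

open PopTsack


section Aux

variable {G : Type*} [Group G] {R : Set G}

open PopTsack

lemma conj_list_prod (g : G) (l : List G) :
    (l.map (fun t => g * t * g⁻¹)).prod = g * l.prod * g⁻¹ := by
  induction l with
  | nil => simp
  | cons a l ih => simp only [List.map_cons, List.prod_cons, ih, List.prod_cons]; group

lemma absLength_conj (hR : ∀ g t, t ∈ R → g * t * g⁻¹ ∈ R) (g w : G) :
    absLength R (g * w * g⁻¹) = absLength R w := by
  unfold absLength
  congr 1
  ext r
  constructor
  · rintro ⟨l, hlen, hmem, hprod⟩
    refine ⟨l.map (fun t => g⁻¹ * t * g⁻¹⁻¹), by simp [hlen], ?_, ?_⟩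
    · intro t ht
      obtain ⟨a, ha, rfl⟩ := List.mem_map.mp ht
      exact hR g⁻¹ a (hmem a ha)
    · rw [conj_list_prod, hprod]; group
  · rintro ⟨l, hlen, hmem, hprod⟩
    refine ⟨l.map (fun t => g * t * g⁻¹), by simp [hlen], ?_, ?_⟩
    · intro t ht
      obtain ⟨a, ha, rfl⟩ := List.mem_map.mp ht
      exact hR g a (hmem a ha)
    · rw [conj_list_prod, hprod]

lemma absLe_conj (hR : ∀ g t, t ∈ R → g * t * g⁻¹ ∈ R) (g v w : G) :
    absLe R (g * v * g⁻¹) (g * w * g⁻¹) ↔ absLe R v w := by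
  unfold absLe
  have h1 : (g * w * g⁻¹) * (g * v * g⁻¹)⁻¹ = g * (w * v⁻¹) * g⁻¹ := by group
  rw [h1, absLength_conj hR, absLength_conj hR, absLength_conj hR]

lemma absLength_eq_zero (hgen : ∀ x : G, ∃ l : List G, (∀ t ∈ l, t ∈ R) ∧ l.prod = x)
    (x : G) (hx : absLength R x = 0) : x = 1 := by
  obtain ⟨l, hmem, hprod⟩ := hgen x
  have hne : {r : ℕ | ∃ l : List G, l.length = r ∧ (∀ t ∈ l, t ∈ R) ∧ l.prod = x}.Nonempty :=
    ⟨l.length, l, rfl, hmem, hprod⟩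
  have := Nat.sInf_mem hne
  rw [show sInf {r : ℕ | ∃ l : List G, l.length = r ∧ (∀ t ∈ l, t ∈ R) ∧ l.prod = x}
      = absLength R x from rfl, hx] at this
  obtain ⟨l', hl', _, hprod'⟩ := this
  rw [List.length_eq_zero_iff] at hl'
  subst hl'
  simpa using hprod'.symm

lemma absLe_antisymm (hgen : ∀ x : G, ∃ l : List G, (∀ t ∈ l, t ∈ R) ∧ l.prod = x)
    {p q : G} (h1 : absLe R p q) (h2 : absLe R q p) : p = q := by
  unfold absLe at h1 h2
  have h0 : absLength R (q * p⁻¹) = 0 := by omega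
  have := absLength_eq_zero hgen _ h0
  have : q = p := by
    have := mul_eq_one_iff_eq_inv.mp this
    rw [this]; group
  exact this.symm

lemma IsNCJoin_conj (hR : ∀ g t, t ∈ R → g * t * g⁻¹ ∈ R) (g c : G) {A : Set G} {p : G}
    (h : IsNCJoin R c A p) :
    IsNCJoin R (g * c * g⁻¹) ((fun a => g * a * g⁻¹) '' A) (g * p * g⁻¹) := by
  obtain ⟨hpc, hub, hlub⟩ := h
  refine ⟨(absLe_conj hR g p c).mpr hpc, ?_, ?_⟩
  · rintro a ⟨a₀, ha₀, rfl⟩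
    exact (absLe_conj hR g a₀ p).mpr (hub a₀ ha₀)
  · intro q hqc hq
    have hq' : ∀ a ∈ A, absLe R a (g⁻¹ * q * g) := by
      intro a ha
      have := hq (g * a * g⁻¹) ⟨a, ha, rfl⟩
      have h2 : absLe R (g * a * g⁻¹) (g * (g⁻¹ * q * g) * g⁻¹) := by
        convert this using 2; group
      exact (absLe_conj hR g a (g⁻¹ * q * g)).mp h2
    have hqc' : absLe R (g⁻¹ * q * g) c := by
      have h2 : absLe R (g * (g⁻¹ * q * g) * g⁻¹) (g * c * g⁻¹) := by
        convert hqc using 2; group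
      exact (absLe_conj hR g _ c).mp h2
    have := hlub _ hqc' hq'
    have h3 := (absLe_conj hR g p (g⁻¹ * q * g)).mpr this
    convert h3 using 1; group

lemma conj_below_set (hR : ∀ g t, t ∈ R → g * t * g⁻¹ ∈ R) (g w : G) :
    {t | t ∈ R ∧ absLe R t (g * w * g⁻¹)} =
      (fun a => g * a * g⁻¹) '' {t | t ∈ R ∧ absLe R t w} := by
  ext t
  constructor
  · rintro ⟨htR, htle⟩
    refine ⟨g⁻¹ * t * g, ⟨?_, ?_⟩, by group⟩
    · have := hR g⁻¹ t htR; simpa using this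
    · have h2 : absLe R (g * (g⁻¹ * t * g) * g⁻¹) (g * w * g⁻¹) := by
        convert htle using 2; group
      exact (absLe_conj hR g _ w).mp h2
  · rintro ⟨a, ⟨haR, hale⟩, rfl⟩
    exact ⟨hR g a haR, (absLe_conj hR g a w).mpr hale⟩

end Aux


/-- Let `W` be a finite irreducible Coxeter group with a fixed Coxeter element
`c`.  For every `w ∈ W`:
(1) `c * π_T(w,c) * c⁻¹ = π_T(c w c⁻¹, c)`, and
(2) `c * Pop_T(w,c) * c⁻¹ = Pop_T(c w c⁻¹, c)`;
that is, `π_T` and `Pop_T` are equivariant with respect to conjugation by `c`. -/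
theorem popTsack_conjugation_equivariance
    {B W : Type*} [Group W] [Finite W] {M : CoxeterMatrix B} (cs : CoxeterSystem M W)
    (hirr : M.IsIrreducible) (c : W) (hc : cs.IsCoxeterElement c) (w : W) :
    c * piT cs.reflections c w * c⁻¹ = piT cs.reflections c (c * w * c⁻¹) ∧
    c * popT cs.reflections c w * c⁻¹ = popT cs.reflections c (c * w * c⁻¹) := by
  set R := cs.reflections with hRdef
  -- reflections are closed under conjugation
  have hR : ∀ g t : W, t ∈ R → g * t * g⁻¹ ∈ R := by
    rintro g t ⟨u, i, rfl⟩
    exact ⟨g * u, i, by group⟩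
  -- reflections generate W
  have hgen : ∀ x : W, ∃ l : List W, (∀ t ∈ l, t ∈ R) ∧ l.prod = x := by
    intro x
    obtain ⟨ω, rfl⟩ := cs.wordProd_surjective x
    refine ⟨ω.map cs.simple, ?_, rfl⟩
    intro t ht
    obtain ⟨i, _, rfl⟩ := List.mem_map.mp ht
    exact ⟨1, i, by group⟩
  have hcc : c * c * c⁻¹ = c := by group
  have key : c * piT R c w * c⁻¹ = piT R c (c * w * c⁻¹) := by
    unfold piT
    by_cases h : ∃ p : W, IsNCJoin R c {t | t ∈ R ∧ absLe R t w} p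
    · have hjoin : IsNCJoin R c {t | t ∈ R ∧ absLe R t (c * w * c⁻¹)}
          (c * h.choose * c⁻¹) := by
        rw [conj_below_set hR]
        have h2 := IsNCJoin_conj hR c c h.choose_spec
        rwa [hcc] at h2
      have h' : ∃ p : W, IsNCJoin R c {t | t ∈ R ∧ absLe R t (c * w * c⁻¹)} p :=
        ⟨_, hjoin⟩
      rw [dif_pos h, dif_pos h']
      have h1 := h'.choose_spec
      exact absLe_antisymm hgen (hjoin.2.2 _ h1.1 h1.2.1) (h1.2.2 _ hjoin.1 hjoin.2.1)
    · have h' : ¬ ∃ p : W, IsNCJoin R c {t | t ∈ R ∧ absLe R t (c * w * c⁻¹)} p := by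
        rintro ⟨p, hp⟩
        refine h ⟨c⁻¹ * p * c, ?_⟩
        have := IsNCJoin_conj hR c⁻¹ c hp
        rw [conj_below_set hR] at this
        have hset : (fun a => c⁻¹ * a * c⁻¹⁻¹) '' ((fun a => c * a * c⁻¹) ''
            {t | t ∈ R ∧ absLe R t w}) = {t | t ∈ R ∧ absLe R t w} := by
          rw [← Set.image_comp]
          convert Set.image_id _
          ext a; simp; group
        rw [hset] at this
        have hc' : c⁻¹ * c * c⁻¹⁻¹ = c := by group
        rw [hc'] at this
        convert this using 1
        group
      rw [dif_neg h, dif_neg h']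
      group
  refine ⟨key, ?_⟩
  unfold popT
  rw [← key]
  group
end

section
/- Let W = I_2(h) be the dihedral group of order 2h (h >= 3) with Coxeter element c. Then the noncrossing partitions of W are exactly the identity e, the h reflections, and c, so Pop_T(w) = e for every such w. Moreover, for each integer 1 <= i <= h-1, the least k >= 0 with Pop_T^k(c^{-i}) = e is exactly h - i. -/
open PopTsack

/-!
In `I₂(m + 2)` with `ρ = s₀ s₁`, every element is a rotation `ρ ^ j` or a reflection `ρ ^ j s₀`,
and the map to `DihedralGroup (m + 2)` shows that these are distinct modulo `m + 2`. So
reflections have absolute length `1` and nontrivial rotations absolute length `2`, every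
reflection lies below every nontrivial rotation, and the only element of `[1, ρ]` above two
distinct reflections is `ρ`. Hence `π_T` fixes `1`, the reflections and `ρ`, while
`π_T(ρ ^ j) = ρ` whenever `ρ ^ j ≠ 1`: `Pop_T` turns `ρ ^ (-i)` into `ρ ^ (-i-1)`, and reaches
`ρ ^ (-(m + 2)) = 1` after exactly `m + 2 - i` steps.
-/

namespace PopTsack

variable {G : Type*} [Group G] {R : Set G}

theorem absLength_le_length {l : List G} (hl : ∀ t ∈ l, t ∈ R) :
    absLength R l.prod ≤ l.length :=
  Nat.sInf_le ⟨l, rfl, hl, rfl⟩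

theorem exists_list_length_eq_absLength {w : G} (hw : w ∈ Submonoid.closure R) :
    ∃ l : List G, l.length = absLength R w ∧ (∀ t ∈ l, t ∈ R) ∧ l.prod = w := by
  obtain ⟨l, hl, rfl⟩ := Submonoid.exists_list_of_mem_closure hw
  exact Nat.sInf_mem (s := {r | ∃ l' : List G, l'.length = r ∧ (∀ t ∈ l', t ∈ R) ∧ l'.prod = _})
    ⟨_, l, rfl, hl, rfl⟩

@[simp]
theorem absLength_one : absLength R 1 = 0 :=
  Nat.le_zero.mp (absLength_le_length (l := []) (by simp))

theorem eq_one_of_absLength_eq_zero {w : G} (hw : w ∈ Submonoid.closure R)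
    (h : absLength R w = 0) : w = 1 := by
  obtain ⟨l, hl, -, rfl⟩ := exists_list_length_eq_absLength hw
  simp [List.length_eq_zero_iff.mp (hl.trans h)]

theorem mem_of_absLength_eq_one {w : G} (hw : w ∈ Submonoid.closure R)
    (h : absLength R w = 1) : w ∈ R := by
  obtain ⟨l, hl, hlR, rfl⟩ := exists_list_length_eq_absLength hw
  obtain ⟨t, rfl⟩ := List.length_eq_one_iff.mp (hl.trans h)
  simpa using hlR

theorem absLength_of_mem (h1 : (1 : G) ∉ R) {t : G} (ht : t ∈ R) : absLength R t = 1 := by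
  have hle : absLength R t ≤ 1 := by simpa using absLength_le_length (l := [t]) (by simpa)
  have hne : absLength R t ≠ 0 := fun h0 =>
    h1 (eq_one_of_absLength_eq_zero (Submonoid.subset_closure ht) h0 ▸ ht)
  omega

theorem absLength_eq_two {w a b : G} (hw1 : w ≠ 1)
    (hwR : w ∉ R) (ha : a ∈ R) (hb : b ∈ R) (hab : a * b = w) : absLength R w = 2 := by
  have hle : absLength R w ≤ 2 := by
    simpa [← hab] using absLength_le_length (l := [a, b]) (by simp [ha, hb])
  have hw : w ∈ Submonoid.closure R :=
    hab ▸ mul_mem (Submonoid.subset_closure ha) (Submonoid.subset_closure hb)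
  have hne0 : absLength R w ≠ 0 := fun h => hw1 (eq_one_of_absLength_eq_zero hw h)
  have hne1 : absLength R w ≠ 1 := fun h => hwR (mem_of_absLength_eq_one hw h)
  omega

theorem absLe_refl (w : G) : absLe R w w := by
  simp [absLe]

theorem one_absLe (w : G) : absLe R 1 w := by
  simp [absLe]

theorem absLength_le_of_absLe {v w : G} (h : absLe R v w) : absLength R v ≤ absLength R w :=
  h ▸ Nat.le_add_right _ _

theorem eq_of_absLe_of_absLength_le (hR : Submonoid.closure R = ⊤) {v w : G}
    (h : absLe R v w) (hlen : absLength R w ≤ absLength R v) : v = w := by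
  have h0 : absLength R (w * v⁻¹) = 0 := by unfold absLe at h; omega
  exact (mul_inv_eq_one.mp (eq_one_of_absLength_eq_zero (hR ▸ Submonoid.mem_top _) h0)).symm

theorem absLe_antisymm (hR : Submonoid.closure R = ⊤) {v w : G} (hvw : absLe R v w)
    (hwv : absLe R w v) : v = w :=
  eq_of_absLe_of_absLength_le hR hvw (absLength_le_of_absLe hwv)

theorem absLe_of_mem_of_mul_inv_mem (h1 : (1 : G) ∉ R) {t w : G} (ht : t ∈ R)
    (hwt : w * t⁻¹ ∈ R) (hw : absLength R w = 2) : absLe R t w := by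
  rw [absLe, absLength_of_mem h1 ht, absLength_of_mem h1 hwt, hw]

theorem absLe_iff_of_absLength_eq_two (hR : Submonoid.closure R = ⊤) (h1 : (1 : G) ∉ R)
    {c w : G} (hc : absLength R c = 2) :
    absLe R w c ↔ w = 1 ∨ (w ∈ R ∧ c * w⁻¹ ∈ R) ∨ w = c := by
  refine ⟨fun hw => ?_, ?_⟩
  · have hsum : absLength R w + absLength R (c * w⁻¹) = 2 := hc ▸ hw
    obtain h0 | h1 | h2 : absLength R w = 0 ∨ absLength R w = 1 ∨ absLength R w = 2 := by omega
    · exact .inl (eq_one_of_absLength_eq_zero (hR ▸ Submonoid.mem_top _) h0)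
    · exact .inr (.inl ⟨mem_of_absLength_eq_one (hR ▸ Submonoid.mem_top _) h1,
        mem_of_absLength_eq_one (hR ▸ Submonoid.mem_top _) (by omega)⟩)
    · exact .inr (.inr (eq_of_absLe_of_absLength_le hR hw (hc.trans h2.symm).le))
  · rintro (rfl | ⟨hwR, hcw⟩ | rfl)
    · exact one_absLe c
    · exact absLe_of_mem_of_mul_inv_mem h1 hwR hcw hc
    · exact absLe_refl w

theorem IsNCJoin.unique (hR : Submonoid.closure R = ⊤) {c p q : G} {A : Set G}
    (hp : IsNCJoin R c A p) (hq : IsNCJoin R c A q) : p = q :=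
  absLe_antisymm hR (hp.2.2 q hq.1 hq.2.1) (hq.2.2 p hp.1 hp.2.1)

theorem isNCJoin_of_mem {c p : G} {A : Set G} (hpc : absLe R p c) (hpA : p ∈ A)
    (hA : ∀ a ∈ A, absLe R a p) : IsNCJoin R c A p :=
  ⟨hpc, hA, fun _ _ hq => hq p hpA⟩

theorem isNCJoin_one {c : G} {A : Set G} (hA : ∀ a ∈ A, absLe R a 1) : IsNCJoin R c A 1 :=
  ⟨one_absLe c, hA, fun q _ _ => one_absLe q⟩

theorem popT_eq_of_isNCJoin (hR : Submonoid.closure R = ⊤) {c w p : G}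
    (hp : IsNCJoin R c {t | t ∈ R ∧ absLe R t w} p) : popT R c w = w * p⁻¹ := by
  have hex : ∃ q, IsNCJoin R c {t | t ∈ R ∧ absLe R t w} q := ⟨p, hp⟩
  rw [popT, piT, dif_pos hex, hex.choose_spec.unique hR hp]

end PopTsack

namespace CoxeterSystem

variable {B W : Type*} [Group W] {M : CoxeterMatrix B} (cs : CoxeterSystem M W)

theorem simple_mem_reflections (i : B) : cs.simple i ∈ cs.reflections :=
  cs.isReflection_simple i

theorem one_notMem_reflections : (1 : W) ∉ cs.reflections := fun h => by
  simpa using (show cs.IsReflection 1 from h).odd_length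

theorem submonoid_closure_reflections : Submonoid.closure cs.reflections = ⊤ :=
  top_le_iff.mp <| cs.submonoid_closure_range_simple ▸
    Submonoid.closure_mono (Set.range_subset_iff.mpr cs.simple_mem_reflections)

end CoxeterSystem

open DihedralGroup

theorem CoxeterMatrix.isLiftable_I_sr (m : ℕ) :
    (CoxeterMatrix.I m).IsLiftable fun i => sr (i : ZMod (m + 2)) := by
  intro i i'
  rw [sr_mul_sr, r_pow, ← r_zero]
  by_cases h : i = i'
  · simp [h]
  · simp [h, CoxeterMatrix.I]

namespace CoxeterSystem

variable {W : Type*} [Group W] {m : ℕ} (cs : CoxeterSystem (CoxeterMatrix.I m) W)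

local notation "σ" => cs.simple 0
local notation "τ" => cs.simple 1
local notation "ρ" => cs.simple 0 * cs.simple 1

theorem dihedral_pow_eq_one : ρ ^ (m + 2) = 1 := by
  simpa [CoxeterMatrix.I] using cs.simple_mul_simple_pow 0 1

theorem dihedral_simple_one_eq : τ = ρ ^ (-1 : ℤ) * σ := by
  rw [zpow_neg_one, mul_inv_rev, cs.inv_simple, cs.inv_simple, mul_assoc,
    cs.simple_mul_simple_self, mul_one]

theorem dihedral_zpow_mul_simple_one (k : ℤ) : ρ ^ k * τ = ρ ^ (k - 1) * σ := by
  rw [sub_eq_add_neg, zpow_add, mul_assoc, ← dihedral_simple_one_eq]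

theorem dihedral_simple_mul_zpow (j : ℤ) : σ * ρ ^ j = ρ ^ (-j) * σ := by
  have h : SemiconjBy σ ρ ρ⁻¹ := by
    rw [SemiconjBy, mul_inv_rev, cs.inv_simple, cs.inv_simple, ← mul_assoc,
      cs.simple_mul_simple_self, one_mul, mul_assoc, cs.simple_mul_simple_self, mul_one]
  rw [(h.zpow_right j).eq, inv_zpow']

theorem dihedral_zpow_mul_simple_mul_zpow (j k : ℤ) :
    ρ ^ j * σ * ρ ^ k = ρ ^ (j - k) * σ := by
  rw [mul_assoc, dihedral_simple_mul_zpow, ← mul_assoc, ← zpow_add, sub_eq_add_neg]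

theorem dihedral_zpow_mul_simple_mul_zpow_mul_simple (j k : ℤ) :
    ρ ^ j * σ * (ρ ^ k * σ) = ρ ^ (j - k) := by
  rw [← mul_assoc, dihedral_zpow_mul_simple_mul_zpow, mul_assoc, cs.simple_mul_simple_self,
    mul_one]

theorem dihedral_zpow_mul_simple_inv (j : ℤ) : (ρ ^ j * σ)⁻¹ = ρ ^ j * σ :=
  inv_eq_of_mul_eq_one_right <| by
    rw [dihedral_zpow_mul_simple_mul_zpow_mul_simple, sub_self, zpow_zero]

theorem dihedral_exists_zpow (w : W) : ∃ j : ℤ, w = ρ ^ j ∨ w = ρ ^ j * σ := by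
  induction w using cs.simple_induction_left with
  | one => exact ⟨0, .inl (zpow_zero _).symm⟩
  | mul_simple_left w i ih =>
    obtain ⟨j, hj⟩ : ∃ j : ℤ, σ * w = ρ ^ j ∨ σ * w = ρ ^ j * σ := by
      obtain ⟨j, rfl | rfl⟩ := ih
      · exact ⟨-j, .inr (dihedral_simple_mul_zpow cs j)⟩
      · refine ⟨-j, .inl ?_⟩
        rw [← mul_assoc, dihedral_simple_mul_zpow, mul_assoc, cs.simple_mul_simple_self, mul_one]
    match i with
    | 0 => exact ⟨j, hj⟩
    | 1 =>
      have hτ : τ * w = ρ ^ (-1 : ℤ) * (σ * w) := by rw [← mul_assoc, ← dihedral_simple_one_eq]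
      refine ⟨-1 + j, ?_⟩
      rw [hτ, zpow_add]
      rcases hj with h | h <;> rw [h, mul_assoc]
      exacts [.inl rfl, .inr rfl]

def toDihedralGroup : W →* DihedralGroup (m + 2) :=
  cs.lift ⟨_, CoxeterMatrix.isLiftable_I_sr m⟩

theorem toDihedralGroup_simple (i : Fin 2) :
    cs.toDihedralGroup (cs.simple i) = sr (i : ZMod (m + 2)) :=
  cs.lift_apply_simple _ i

theorem toDihedralGroup_zpow (j : ℤ) : cs.toDihedralGroup (ρ ^ j) = r (j : ZMod (m + 2)) := by
  simp [toDihedralGroup_simple]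

theorem toDihedralGroup_zpow_mul_simple (j : ℤ) :
    cs.toDihedralGroup (ρ ^ j * σ) = sr (-j : ZMod (m + 2)) := by
  simp [toDihedralGroup_zpow, toDihedralGroup_simple]

theorem dihedral_zpow_eq_one_iff (j : ℤ) : ρ ^ j = 1 ↔ ((m + 2 : ℕ) : ℤ) ∣ j := by
  refine ⟨fun h => ?_, fun ⟨k, hk⟩ => ?_⟩
  · have := cs.toDihedralGroup_zpow j
    rwa [h, map_one, one_def, r.injEq, eq_comm, ZMod.intCast_zmod_eq_zero_iff_dvd] at this
  · rw [hk, zpow_mul, zpow_natCast, dihedral_pow_eq_one, one_zpow]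

theorem toDihedralGroup_injective : Function.Injective cs.toDihedralGroup := by
  refine (injective_iff_map_eq_one _).mpr fun w hw => ?_
  obtain ⟨j, rfl | rfl⟩ := cs.dihedral_exists_zpow w
  · rw [toDihedralGroup_zpow, one_def, r.injEq, ZMod.intCast_zmod_eq_zero_iff_dvd] at hw
    exact (cs.dihedral_zpow_eq_one_iff j).mpr hw
  · rw [toDihedralGroup_zpow_mul_simple, one_def] at hw
    cases hw

theorem dihedral_zpow_ne_zpow_mul_simple (j k : ℤ) : ρ ^ j ≠ ρ ^ k * σ := fun h => by
  simpa [toDihedralGroup_zpow, toDihedralGroup_zpow_mul_simple] using congrArg cs.toDihedralGroup h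

theorem dihedral_conj_zpow_mul_simple (w : W) (j : ℤ) :
    ∃ k : ℤ, w * (ρ ^ j * σ) * w⁻¹ = ρ ^ k * σ := by
  obtain ⟨l, rfl | rfl⟩ := cs.dihedral_exists_zpow w
  · refine ⟨l + j + l, ?_⟩
    rw [← mul_assoc, ← zpow_add, ← zpow_neg, dihedral_zpow_mul_simple_mul_zpow, sub_neg_eq_add]
  · refine ⟨l - j + l, ?_⟩
    rw [dihedral_zpow_mul_simple_inv, dihedral_zpow_mul_simple_mul_zpow_mul_simple, ← mul_assoc,
      ← zpow_add]

theorem dihedral_reflections_eq : cs.reflections = Set.range fun j : ℤ => ρ ^ j * σ := by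
  ext t
  constructor
  · rintro ⟨w, i, rfl⟩
    obtain ⟨k, hk⟩ : ∃ k : ℤ, cs.simple i = ρ ^ k * σ := by
      match i with
      | 0 => exact ⟨0, by rw [zpow_zero, one_mul]⟩
      | 1 => exact ⟨-1, dihedral_simple_one_eq cs⟩
    obtain ⟨l, hl⟩ := cs.dihedral_conj_zpow_mul_simple w k
    exact ⟨l, by rw [hk, hl]⟩
  · rintro ⟨j, rfl⟩
    obtain ⟨k, rfl | rfl⟩ := Int.even_or_odd' j
    · refine ⟨ρ ^ k, 0, ?_⟩
      rw [← zpow_neg, dihedral_zpow_mul_simple_mul_zpow, sub_neg_eq_add, two_mul]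
    · refine ⟨ρ ^ (k + 1), 1, ?_⟩
      rw [dihedral_zpow_mul_simple_one, ← zpow_neg, dihedral_zpow_mul_simple_mul_zpow]
      dsimp only
      congr 2
      ring

theorem dihedral_ncard_reflections : cs.reflections.ncard = m + 2 := by
  have himage : cs.toDihedralGroup '' cs.reflections = Set.range sr := by
    rw [dihedral_reflections_eq, ← Set.range_comp]
    ext x
    simp only [Set.mem_range, Function.comp_apply, toDihedralGroup_zpow_mul_simple]
    exact ⟨fun ⟨j, hj⟩ => ⟨_, hj⟩, fun ⟨i, hi⟩ => ⟨-(i.cast : ℤ), by simp [hi]⟩⟩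
  rw [← Set.ncard_image_of_injective _ cs.toDihedralGroup_injective, himage,
    Set.ncard_range_of_injective fun _ _ => sr.inj, Nat.card_zmod]

theorem dihedral_ne_one : ρ ≠ 1 := fun h => by
  have := Int.le_of_dvd one_pos <| (cs.dihedral_zpow_eq_one_iff 1).mp (by rwa [zpow_one])
  omega

theorem dihedral_zpow_mul_simple_mem_reflections (j : ℤ) : ρ ^ j * σ ∈ cs.reflections :=
  cs.dihedral_reflections_eq ▸ ⟨j, rfl⟩

theorem dihedral_zpow_notMem_reflections (j : ℤ) : ρ ^ j ∉ cs.reflections := by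
  rw [dihedral_reflections_eq]
  rintro ⟨k, hk⟩
  exact cs.dihedral_zpow_ne_zpow_mul_simple j k hk.symm

theorem dihedral_zpow_mul_inv_mem_reflections {t : W} (ht : t ∈ cs.reflections) (j : ℤ) :
    ρ ^ j * t⁻¹ ∈ cs.reflections := by
  obtain ⟨k, rfl⟩ : t ∈ Set.range fun k : ℤ => ρ ^ k * σ := cs.dihedral_reflections_eq ▸ ht
  rw [dihedral_zpow_mul_simple_inv, ← mul_assoc, ← zpow_add]
  exact cs.dihedral_zpow_mul_simple_mem_reflections _

theorem dihedral_absLength_zpow {j : ℤ} (hj : ρ ^ j ≠ 1) :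
    absLength cs.reflections (ρ ^ j) = 2 :=
  absLength_eq_two hj (cs.dihedral_zpow_notMem_reflections j)
    (cs.dihedral_zpow_mul_simple_mem_reflections j) (cs.simple_mem_reflections 0)
    (by rw [mul_assoc, cs.simple_mul_simple_self, mul_one])

theorem dihedral_absLe_zpow {t : W} (ht : t ∈ cs.reflections) {j : ℤ} (hj : ρ ^ j ≠ 1) :
    absLe cs.reflections t (ρ ^ j) :=
  absLe_of_mem_of_mul_inv_mem cs.one_notMem_reflections ht
    (cs.dihedral_zpow_mul_inv_mem_reflections ht j) (cs.dihedral_absLength_zpow hj)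

theorem dihedral_absLe_iff (w : W) :
    absLe cs.reflections w ρ ↔ w = 1 ∨ w ∈ cs.reflections ∨ w = ρ := by
  have hρ : absLength cs.reflections ρ = 2 := by
    simpa using cs.dihedral_absLength_zpow (j := 1) (by simpa using cs.dihedral_ne_one)
  rw [absLe_iff_of_absLength_eq_two cs.submonoid_closure_reflections cs.one_notMem_reflections hρ]
  refine or_congr_right (or_congr_left (and_iff_left_of_imp fun hw => ?_))
  simpa using cs.dihedral_zpow_mul_inv_mem_reflections hw 1

theorem dihedral_isNCJoin {A : Set W} (hA : A ⊆ cs.reflections) (hσ : σ ∈ A) (hτ : τ ∈ A) :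
    IsNCJoin cs.reflections ρ A ρ := by
  have hR := cs.submonoid_closure_reflections
  refine ⟨absLe_refl ρ, fun a ha => (cs.dihedral_absLe_iff a).mpr (.inr (.inl (hA ha))),
    fun q hq hAq => ?_⟩
  obtain rfl | hqR | rfl := (cs.dihedral_absLe_iff q).mp hq
  · have hσ1 := eq_of_absLe_of_absLength_le hR (hAq σ hσ) (by simp)
    exact absurd (hσ1 ▸ hA hσ) cs.one_notMem_reflections
  · have hle : ∀ t ∈ A, t = q := fun t ht => eq_of_absLe_of_absLength_le hR (hAq t ht) <| by
      rw [absLength_of_mem cs.one_notMem_reflections hqR,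
        absLength_of_mem cs.one_notMem_reflections (hA ht)]
    refine absurd ?_ cs.dihedral_ne_one
    rw [(hle σ hσ).trans (hle τ hτ).symm, cs.simple_mul_simple_self]
  · exact absLe_refl _

theorem dihedral_popT_zpow {j : ℤ} (hj : ρ ^ j ≠ 1) :
    popT cs.reflections ρ (ρ ^ j) = ρ ^ (j - 1) := by
  have hbelow : ∀ i, cs.simple i ∈ {t | t ∈ cs.reflections ∧ absLe cs.reflections t (ρ ^ j)} :=
    fun i => ⟨cs.simple_mem_reflections i,
      cs.dihedral_absLe_zpow (cs.simple_mem_reflections i) hj⟩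
  rw [popT_eq_of_isNCJoin cs.submonoid_closure_reflections
    (cs.dihedral_isNCJoin (fun t ht => ht.1) (hbelow 0) (hbelow 1)), zpow_sub_one]

theorem dihedral_popT_eq_one {w : W} (hw : absLe cs.reflections w ρ) :
    popT cs.reflections ρ w = 1 := by
  obtain rfl | hwR | rfl := (cs.dihedral_absLe_iff w).mp hw
  · rw [popT_eq_of_isNCJoin cs.submonoid_closure_reflections (isNCJoin_one fun a ha => ha.2),
      mul_inv_cancel]
  · rw [popT_eq_of_isNCJoin cs.submonoid_closure_reflections
      (isNCJoin_of_mem hw ⟨hwR, absLe_refl w⟩ fun a ha => ha.2), mul_inv_cancel]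
  · simpa using cs.dihedral_popT_zpow (j := 1) (by simpa using cs.dihedral_ne_one)

theorem dihedral_iterate_popT_zpow (j : ℤ) (k : ℕ) (hk : ∀ l < k, ρ ^ (j - l) ≠ 1) :
    (popT cs.reflections ρ)^[k] (ρ ^ j) = ρ ^ (j - k) := by
  induction k with
  | zero => simp
  | succ k ih =>
    rw [Function.iterate_succ_apply', ih fun l hl => hk l (by omega),
      cs.dihedral_popT_zpow (hk k k.lt_add_one), Nat.cast_succ, sub_sub]

theorem dihedral_iterate_popT_inv_pow {i : ℕ} (hi : 1 ≤ i) (him : i ≤ m + 1) :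
    (popT cs.reflections ρ)^[m + 2 - i] (ρ⁻¹ ^ i) = 1 ∧
      ∀ k < m + 2 - i, (popT cs.reflections ρ)^[k] (ρ⁻¹ ^ i) ≠ 1 := by
  have hne : ∀ l : ℕ, i + l < m + 2 → ρ ^ (-(i : ℤ) - l) ≠ 1 := fun l hl h => by
    have := Int.eq_zero_of_dvd_of_natAbs_lt_natAbs ((cs.dihedral_zpow_eq_one_iff _).mp h)
      (by omega)
    omega
  have hiter : ∀ k ≤ m + 2 - i, (popT cs.reflections ρ)^[k] (ρ⁻¹ ^ i) = ρ ^ (-(i : ℤ) - k) :=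
    fun k hk => by
      rw [inv_pow, ← zpow_natCast, ← zpow_neg]
      exact cs.dihedral_iterate_popT_zpow _ k fun l hl => hne l (by omega)
  refine ⟨?_, fun k hk => hiter k hk.le ▸ hne k (by omega)⟩
  rw [hiter _ le_rfl, cs.dihedral_zpow_eq_one_iff]
  exact ⟨-1, by omega⟩

end CoxeterSystem

/-- Let `W = I₂(h)` be the dihedral group of order `2h` (`h ≥ 3`), presented
by the Coxeter matrix `I₂ₘ (h-2)` (whose off-diagonal entry is `h`), with Coxeter element
`c = s * t`.  Then the noncrossing partitions of `W` (the elements `w` with `w ≤_T c`) are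
exactly the identity, the `h` reflections, and `c`; consequently `Pop_T(w) = e` for every such
`w`.  Moreover, for each `1 ≤ i ≤ h-1`, the least `k ≥ 0` with `Pop_T^k(c^{-i}) = e` is exactly
`h - i`. -/
theorem popTsack_dihedral
    {W : Type*} [Group W] (h : ℕ) (hh : 3 ≤ h)
    (cs : CoxeterSystem (CoxeterMatrix.I (h - 2)) W)
    (c : W) (hc : c = cs.simple 0 * cs.simple 1) :
    Set.ncard cs.reflections = h ∧
    (∀ w : W, absLe cs.reflections w c ↔ (w = 1 ∨ w ∈ cs.reflections ∨ w = c)) ∧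
    (∀ w : W, absLe cs.reflections w c → popT cs.reflections c w = 1) ∧
    (∀ i : ℕ, 1 ≤ i → i ≤ h - 1 →
      (popT cs.reflections c)^[h - i] (c⁻¹ ^ i) = 1 ∧
      ∀ k : ℕ, k < h - i → (popT cs.reflections c)^[k] (c⁻¹ ^ i) ≠ 1) := by
  subst hc
  have hm : h - 2 + 2 = h := by omega
  refine ⟨cs.dihedral_ncard_reflections.trans hm, cs.dihedral_absLe_iff,
    fun _ => cs.dihedral_popT_eq_one, fun i hi hih => ?_⟩
  simpa only [hm] using cs.dihedral_iterate_popT_inv_pow hi (by omega)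
end

section
/- Let n >= 2, let S_n be the symmetric group on [n] with Coxeter element c = (1 2 ... n). For every w in S_n, aexc(Pop_T(w)) = aexc(w) - cyc_{>1}(pi_T(w)), where cyc_{>1}(pi_T(w)) is the number of non-singleton cycles of the noncrossing projection pi_T(w). -/
/-- The number of antiexceedances of a permutation `w` of `Fin n`: the number of `i` with
`i < w⁻¹ i`. -/
def Equiv.Perm.aexc {n : ℕ} (w : Equiv.Perm (Fin n)) : ℕ :=
  (Finset.univ.filter fun i : Fin n => i < w⁻¹ i).card

open PopTsack

/-!
Write `ℓ` for the absolute length. Multiplying `v` by a transposition `(i j)` splits a cycle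
when `i, j` share a cycle of `v` and merges two cycles otherwise; hence
`ℓ v + #cycles(v) = n`, `(i j) ≤_T v` iff `i, j` share a cycle of `v`, and the absolute
order is transitive. For `π = π_T(w)` this gives: every cycle of `w` lies in a cycle of `π`;
every fixed point of `w` is fixed by `π` (otherwise cutting that point out of its `π`-cycle
gives a smaller upper bound in `NC(S_n, c)`); and, since `π ≤_T c` forces
`π (x y) ≤_T c (x y)` whenever `x, y` share a cycle of `π`, and the two cycles of `c (x y)`
are the two arcs between `x` and `y`, each `π x` is the first element of the `π`-cycle of `x`
after `x` in the cyclic order. Consequently, for every `j`, `w j < j` holds iff either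
`w j < π j` or `j` is the largest element of a nontrivial cycle of `π`, and never both;
counting such `j` gives `aexc w = aexc (w π⁻¹) + cyc_{>1}(π)`.
-/

namespace Equiv.Perm

section Orbits
variable {α : Type*} [Finite α]

theorem SameCycle.mem_of_forall_apply_mem {f : Perm α} {S : Set α}
    (hS : ∀ s ∈ S, f s ∈ S) {x y : α} (h : f.SameCycle x y) (hx : x ∈ S) : y ∈ S := by
  obtain ⟨k, rfl⟩ := h.exists_nat_pow_eq
  clear h
  induction k with
  | zero => simpa
  | succ k ih => rw [pow_succ', mul_apply]; exact hS _ ih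

variable [DecidableEq α] {v : Perm α} {i j x y : α}

theorem SameCycle.of_mul_swap (h : (v * swap i j).SameCycle x y) :
    v.SameCycle x y ∨ (v.SameCycle x i ∧ v.SameCycle j y) ∨
      (v.SameCycle x j ∧ v.SameCycle i y) := by
  refine h.mem_of_forall_apply_mem (S := {y | v.SameCycle x y ∨ (v.SameCycle x i ∧
    v.SameCycle j y) ∨ (v.SameCycle x j ∧ v.SameCycle i y)}) (fun s hs => ?_) (.inl .rfl)
  have hstep : v.SameCycle (swap i j s) ((v * swap i j) s) := ⟨1, by simp⟩
  rcases eq_or_ne s i with rfl | hsi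
  · grind [SameCycle.trans, SameCycle.symm, swap_apply_left]
  rcases eq_or_ne s j with rfl | hsj
  · grind [SameCycle.trans, SameCycle.symm, swap_apply_right]
  · rw [swap_apply_of_ne_of_ne hsi hsj] at hstep
    grind [SameCycle.trans, SameCycle.symm]

theorem not_sameCycle_mul_swap (hij : i ≠ j) (h : v.SameCycle i j) :
    ¬ (v * swap i j).SameCycle i j := by
  have hex : ∃ t, (v ^ (t + 1)) j = i := by
    obtain ⟨k, hk⟩ := h.symm.exists_nat_pow_eq
    obtain _ | t := k
    · exact absurd hk.symm (by simpa using hij)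
    · exact ⟨t, hk⟩
  set t := Nat.find hex
  have hmin : ∀ m < t, (v ^ (m + 1)) j ≠ i := fun m hm => Nat.find_min hex hm
  have hj : ∀ m ≤ t, (v ^ (m + 1)) j ≠ j := by
    intro m hm hmj
    have : (v ^ (t - m)) j = i := by
      rw [← hmj, ← mul_apply, ← pow_add, show t - m + (m + 1) = t + 1 by omega]
      exact Nat.find_spec hex
    rcases hm.lt_or_eq with hlt | rfl
    · exact hmin (t - m - 1) (by omega) (by rwa [Nat.sub_add_cancel (by omega)])
    · exact hij (by simpa using this.symm)
  -- the arc `v j, v² j, …, i` of the cycle is invariant under `v * swap i j` and avoids `j`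
  have hinv : ∀ s ∈ {s | ∃ m ≤ t, (v ^ (m + 1)) j = s}, (v * swap i j) s ∈
      {s | ∃ m ≤ t, (v ^ (m + 1)) j = s} := by
    rintro _ ⟨m, hm, rfl⟩
    rcases hm.lt_or_eq with hm | rfl
    · refine ⟨m + 1, hm, ?_⟩
      rw [mul_apply, swap_apply_of_ne_of_ne (hmin m hm) (hj m hm.le), ← mul_apply, ← pow_succ']
    · exact ⟨0, t.zero_le, by rw [Nat.find_spec hex]; simp⟩
  intro hsc
  obtain ⟨m, hm, hmj⟩ := hsc.mem_of_forall_apply_mem hinv ⟨t, le_rfl, Nat.find_spec hex⟩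
  exact hj m hm hmj

theorem sameCycle_mul_swap_of_not_sameCycle (h : ¬ v.SameCycle i j) :
    (v * swap i j).SameCycle i j := by
  have hex : ∃ p, (v ^ (p + 1)) j = j := by
    refine ⟨orderOf v - 1, ?_⟩
    rw [Nat.sub_add_cancel (orderOf_pos v), pow_orderOf_eq_one, one_apply]
  set p := Nat.find hex
  have key : ∀ m ≤ p, ((v * swap i j) ^ (m + 1)) i = (v ^ (m + 1)) j := by
    intro m
    induction m with
    | zero => simp
    | succ m ih =>
      intro hm
      have hi : (v ^ (m + 1)) j ≠ i := fun he =>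
        h (SameCycle.symm ⟨(m + 1 : ℕ), by rw [zpow_natCast]; exact he⟩)
      have hj : (v ^ (m + 1)) j ≠ j := Nat.find_min hex (by omega)
      rw [pow_succ', mul_apply, ih (by omega), mul_apply, swap_apply_of_ne_of_ne hi hj,
        ← mul_apply, ← pow_succ']
  exact ⟨(p + 1 : ℕ), by rw [zpow_natCast, key p le_rfl]; exact Nat.find_spec hex⟩

end Orbits

section NumCycles
variable {α : Type*}

/-- The number of cycles of `v`, fixed points included. -/
noncomputable def numCycles (v : Perm α) : ℕ := Nat.card (Quotient (SameCycle.setoid v))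

theorem numCycles_one : numCycles (1 : Perm α) = Nat.card α :=
  (Nat.card_eq_of_bijective _ ⟨fun _ _ h => sameCycle_one.1 (Quotient.exact h),
    Quotient.mk_surjective⟩).symm

theorem numCycles_le_card [Finite α] (v : Perm α) : numCycles v ≤ Nat.card α :=
  Nat.card_le_card_of_surjective _ Quotient.mk_surjective

variable [DecidableEq α] [Finite α] {v : Perm α} {i j : α}

theorem numCycles_mul_swap_of_sameCycle (hij : i ≠ j) (h : v.SameCycle i j) :
    numCycles (v * swap i j) = numCycles v + 1 := by
  set u := v * swap i j
  have hrefine (a b : α) (hab : u.SameCycle a b) : v.SameCycle a b := by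
    rcases hab.of_mul_swap with hab | ⟨ha, hb⟩ | ⟨ha, hb⟩
    exacts [hab, ha.trans (h.trans hb), ha.trans (h.symm.trans hb)]
  let φ : Quotient (SameCycle.setoid u) → Quotient (SameCycle.setoid v) :=
    Quotient.map id hrefine
  apply le_antisymm
  · -- `φ` is injective away from the class of `j`
    classical
    let χ (q : Quotient (SameCycle.setoid u)) : Option (Quotient (SameCycle.setoid v)) :=
      if q = ⟦j⟧ then none else some (φ q)
    have hχ : χ.Injective := by
      rintro ⟨a⟩ ⟨b⟩ hab
      simp only [χ] at hab
      split_ifs at hab with ha hb hb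
      · exact ha.trans hb.symm
      have hab : (u * swap i j).SameCycle a b := by
        rw [mul_swap_mul_self]; exact Quotient.exact (Option.some_injective _ hab)
      rcases hab.of_mul_swap with hab | ⟨-, hb'⟩ | ⟨ha', -⟩
      exacts [Quotient.sound hab, absurd (Quotient.sound hb'.symm) hb,
        absurd (Quotient.sound ha') ha]
    simpa [numCycles, Finite.card_option] using Nat.card_le_card_of_injective χ hχ
  · by_contra! hle
    have hφ : φ.Surjective := Quotient.ind fun a => ⟨⟦a⟧, rfl⟩
    have := (hφ.bijective_of_nat_card_le (Nat.le_of_lt_succ hle)).injective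
      (a₁ := ⟦i⟧) (a₂ := ⟦j⟧) (Quotient.sound h)
    exact not_sameCycle_mul_swap hij h (Quotient.exact this)

theorem numCycles_mul_swap_of_not_sameCycle (hij : i ≠ j) (h : ¬ v.SameCycle i j) :
    numCycles (v * swap i j) + 1 = numCycles v := by
  have := numCycles_mul_swap_of_sameCycle hij (sameCycle_mul_swap_of_not_sameCycle h)
  rwa [mul_swap_mul_self, eq_comm] at this

theorem numCycles_le_numCycles_mul_swap_add_one (v : Perm α) (i j : α) :
    numCycles v ≤ numCycles (v * swap i j) + 1 := by
  rcases eq_or_ne i j with rfl | hij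
  · rw [swap_self, ← Perm.one_def, mul_one]; omega
  by_cases h : v.SameCycle i j
  · rw [numCycles_mul_swap_of_sameCycle hij h]; omega
  · rw [← numCycles_mul_swap_of_not_sameCycle hij h]

end NumCycles

end Equiv.Perm

namespace PopTsack
open Equiv Equiv.Perm

abbrev transpositions (α : Type*) [DecidableEq α] : Set (Perm α) := {t | t.IsSwap}

local notation "ℓ" => absLength (transpositions _)
local infix:50 " ≤ₜ " => absLe (transpositions _)

section AbsoluteLength
variable {α : Type*} [DecidableEq α]

theorem absLength_prod_le_length {l : List (Perm α)} (hl : ∀ t ∈ l, t.IsSwap) :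
    ℓ l.prod ≤ l.length :=
  Nat.sInf_le ⟨l, rfl, hl, rfl⟩

theorem absLength_one_s12 : ℓ (1 : Perm α) = 0 :=
  Nat.le_zero.mp (absLength_prod_le_length (l := []) (by simp))

variable [Finite α] {u v w : Perm α} {i j : α}

theorem exists_isSwap_length_eq_absLength (v : Perm α) :
    ∃ l : List (Perm α), (∀ t ∈ l, t.IsSwap) ∧ l.length = ℓ v ∧ l.prod = v := by
  have hne : ∃ l : List (Perm α), (∀ t ∈ l, t.IsSwap) ∧ l.prod = v := by
    induction v using swap_induction_on with
    | one => exact ⟨[], by simp, rfl⟩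
    | swap_mul f x y hxy ih =>
      obtain ⟨l, hl, rfl⟩ := ih
      exact ⟨swap x y :: l, by simpa using ⟨⟨x, y, hxy, rfl⟩, hl⟩, rfl⟩
  obtain ⟨l, hl, hl₁, hl₂⟩ := Nat.sInf_mem (s := {r | ∃ l : List (Perm α), l.length = r ∧
    (∀ t ∈ l, t ∈ transpositions α) ∧ l.prod = v})
    (hne.elim fun l hl => ⟨l.length, l, rfl, hl.1, hl.2⟩)
  exact ⟨l, hl₁, hl, hl₂⟩

theorem absLength_mul_le (u v : Perm α) : ℓ (u * v) ≤ ℓ u + ℓ v := by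
  obtain ⟨l, hl, hlen, rfl⟩ := exists_isSwap_length_eq_absLength u
  obtain ⟨l', hl', hlen', rfl⟩ := exists_isSwap_length_eq_absLength v
  rw [← hlen, ← hlen']
  simpa using absLength_prod_le_length (l := l ++ l')
    fun t ht => (List.mem_append.1 ht).elim (hl t) (hl' t)

theorem absLength_mul_swap_le (v : Perm α) (i j : α) : ℓ (v * swap i j) ≤ ℓ v + 1 := by
  rcases eq_or_ne i j with rfl | hij
  · rw [swap_self, ← Perm.one_def, mul_one]; omega
  · exact (absLength_mul_le _ _).trans <| by
      simpa using absLength_prod_le_length (l := [swap i j]) (by simpa using ⟨i, j, hij, rfl⟩)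

theorem card_le_absLength_add_numCycles (v : Perm α) : Nat.card α ≤ ℓ v + numCycles v := by
  obtain ⟨l, hl, hlen, rfl⟩ := exists_isSwap_length_eq_absLength v
  rw [← hlen]
  clear hlen
  induction l using List.reverseRecOn with
  | nil => simp [numCycles_one]
  | append_singleton l t ih =>
    simp only [List.mem_append, List.mem_singleton] at hl
    obtain ⟨x, y, -, rfl⟩ := hl t (.inr rfl)
    have := numCycles_le_numCycles_mul_swap_add_one l.prod x y
    have := ih fun t ht => hl t (.inl ht)
    simp only [List.prod_append, List.prod_singleton, List.length_append, List.length_singleton]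
    omega

theorem absLength_add_numCycles_le (v : Perm α) : ℓ v + numCycles v ≤ Nat.card α := by
  induction hk : Nat.card α - numCycles v using Nat.strong_induction_on generalizing v with
  | _ k ih =>
    by_cases hv : v = 1
    · simp [hv, absLength_one_s12, numCycles_one]
    obtain ⟨x, hx⟩ : ∃ x, v x ≠ x := by simpa [Equiv.ext_iff] using hv
    have hsplit := numCycles_mul_swap_of_sameCycle (Ne.symm hx) (SameCycle.refl v x).apply_right
    have hle := numCycles_le_card (v * swap x (v x))
    have hih := ih _ (by omega) (v * swap x (v x)) rfl
    have := mul_swap_mul_self x (v x) v ▸ absLength_mul_swap_le (v * swap x (v x)) x (v x)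
    omega

theorem absLength_add_numCycles (v : Perm α) : ℓ v + numCycles v = Nat.card α :=
  (absLength_add_numCycles_le v).antisymm (card_le_absLength_add_numCycles v)

theorem absLength_mul_swap_of_sameCycle (hij : i ≠ j) (h : v.SameCycle i j) :
    ℓ (v * swap i j) + 1 = ℓ v := by
  have := absLength_add_numCycles v
  have := absLength_add_numCycles (v * swap i j)
  have := numCycles_mul_swap_of_sameCycle hij h
  omega

theorem absLength_mul_swap_of_not_sameCycle (hij : i ≠ j) (h : ¬ v.SameCycle i j) :
    ℓ (v * swap i j) = ℓ v + 1 := by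
  have := absLength_add_numCycles v
  have := absLength_add_numCycles (v * swap i j)
  have := numCycles_mul_swap_of_not_sameCycle hij h
  omega

theorem absLength_swap (hij : i ≠ j) : ℓ (swap i j) = 1 := by
  simpa [absLength_one_s12] using
    absLength_mul_swap_of_not_sameCycle (v := 1) hij (by rwa [sameCycle_one])

theorem absLe_swap_iff (hij : i ≠ j) : swap i j ≤ₜ v ↔ v.SameCycle i j := by
  rw [absLe, swap_inv, absLength_swap hij]
  by_cases h : v.SameCycle i j
  · simpa [h, add_comm] using absLength_mul_swap_of_sameCycle hij h
  · simp only [h, iff_false, absLength_mul_swap_of_not_sameCycle hij h]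
    omega

theorem absLe_trans (huv : u ≤ₜ v) (hvw : v ≤ₜ w) : u ≤ₜ w := by
  have h₁ : ℓ (w * u⁻¹) ≤ ℓ (w * v⁻¹) + ℓ (v * u⁻¹) := by
    simpa [mul_assoc] using absLength_mul_le (w * v⁻¹) (v * u⁻¹)
  have h₂ : ℓ w ≤ ℓ (w * u⁻¹) + ℓ u := by simpa using absLength_mul_le (w * u⁻¹) u
  unfold absLe at *
  omega

theorem sameCycle_of_absLe {x y : α} (huv : u ≤ₜ v) (h : u.SameCycle x y) :
    v.SameCycle x y := by
  rcases eq_or_ne x y with rfl | hxy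
  · rfl
  · exact (absLe_swap_iff hxy).1 (absLe_trans ((absLe_swap_iff hxy).2 h) huv)

theorem mul_swap_absLe (hij : i ≠ j) (h : v.SameCycle i j) : v * swap i j ≤ₜ v := by
  rw [absLe, mul_inv_rev, swap_inv, ← mul_assoc, ← swap_apply_apply,
    absLength_swap (v.injective.ne hij)]
  exact absLength_mul_swap_of_sameCycle hij h

theorem mul_swap_absLe_mul_swap (huv : u ≤ₜ v) (hij : i ≠ j) (h : u.SameCycle i j) :
    u * swap i j ≤ₜ v * swap i j := by
  have hu := absLength_mul_swap_of_sameCycle hij h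
  have hv := absLength_mul_swap_of_sameCycle hij (sameCycle_of_absLe huv h)
  unfold absLe at *
  rw [mul_inv_rev, swap_inv, mul_assoc, swap_mul_self_mul]
  omega

end AbsoluteLength

section Noncrossing
variable {n : ℕ}

theorem finRotate_apply_eq_or_sbtw {a b s : Fin (n + 1)} (hab : a ≠ b)
    (hs : s = a ∨ sbtw a s b) : finRotate (n + 1) s = b ∨ sbtw a (finRotate (n + 1) s) b := by
  have h := coe_finRotate s
  simp only [Nat.succ_eq_add_one, Fin.ext_iff, Fin.val_last] at h
  rw [Ne, Fin.ext_iff] at hab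
  simp only [Fin.sbtw_iff, Fin.lt_def, Fin.ext_iff] at hs ⊢
  split_ifs at h <;> omega

theorem not_sameCycle_finRotate_mul_swap {a b e : Fin n} (h : sbtw a b e) :
    ¬ (finRotate n * swap a b).SameCycle b e := by
  obtain ⟨n, rfl⟩ : ∃ m, n = m + 1 := ⟨n - 1, by have := a.pos; omega⟩
  have hab : a ≠ b := by rintro rfl; exact sbtw_irrefl_left h
  -- the arc `(a, b]` is invariant under `finRotate * swap a b`
  have hinv : ∀ s ∈ {s | s = b ∨ sbtw a s b}, (finRotate (n + 1) * swap a b) s ∈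
      {s | s = b ∨ sbtw a s b} := by
    rintro s (rfl | hs)
    · rw [mul_apply, swap_apply_right]
      exact finRotate_apply_eq_or_sbtw hab (.inl rfl)
    · have hsa : s ≠ a := by rintro rfl; exact sbtw_irrefl_left hs
      have hsb : s ≠ b := by rintro rfl; exact sbtw_irrefl_right hs
      rw [mul_apply, swap_apply_of_ne_of_ne hsa hsb]
      exact finRotate_apply_eq_or_sbtw hab (.inr hs)
  intro hsc
  rcases hsc.mem_of_forall_apply_mem hinv (.inl rfl) with he | he
  · exact sbtw_irrefl_right (he ▸ h)
  · exact sbtw_asymm h (sbtw_cyclic_left he)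

theorem not_sbtw_of_absLe_finRotate {π : Perm (Fin n)} (hπ : π ≤ₜ finRotate n) {x y : Fin n}
    (h : π.SameCycle x y) : ¬ sbtw x y (π x) := by
  intro hbtw
  have hxy : x ≠ y := by rintro rfl; exact sbtw_irrefl_left hbtw
  have : (π * swap x y).SameCycle y (π x) := ⟨1, by simp⟩
  exact not_sameCycle_finRotate_mul_swap hbtw
    (sameCycle_of_absLe (mul_swap_absLe_mul_swap hπ hxy h) this)

end Noncrossing

section NCJoin
variable {α : Type*} [DecidableEq α] [Finite α] {c w π : Perm α}

theorem sameCycle_apply_of_forall_isSwap_absLe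
    (hπ : ∀ t : Perm α, t.IsSwap → t ≤ₜ w → t ≤ₜ π) (j : α) : π.SameCycle j (w j) := by
  by_cases hj : w j = j
  · rw [hj]
  · have hne : j ≠ w j := Ne.symm hj
    exact (absLe_swap_iff hne).1 (hπ _ ⟨j, w j, hne, rfl⟩
      ((absLe_swap_iff hne).2 (SameCycle.refl w j).apply_right))

theorem apply_eq_self_of_isNCJoin
    (hπ : IsNCJoin (transpositions α) c {t | t ∈ transpositions α ∧ t ≤ₜ w} π) {j : α}
    (hwj : w j = j) : π j = j := by
  by_contra hj
  set k := π⁻¹ j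
  have hkj : k ≠ j := fun h => hj (Perm.inv_eq_iff_eq.1 h).symm
  have hk : π.SameCycle k j := ⟨1, by simp [k]⟩
  -- `q` is `π` with `j` cut out of its cycle; it still lies above every transposition below `w`
  set q := π * swap k j
  have hqj : q j = j := by simp [q, k]
  have hq : ∀ t ∈ {t | t ∈ transpositions α ∧ t ≤ₜ w}, t ≤ₜ q := by
    rintro t ⟨⟨a, b, hab, rfl⟩, htw⟩
    have hw := (absLe_swap_iff hab).1 htw
    have ha : a ≠ j := by rintro rfl; exact hab (hw.eq_of_left hwj)
    have hb : b ≠ j := by rintro rfl; exact hab (hw.eq_of_right hwj)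
    have hπab := (absLe_swap_iff hab).1 (hπ.2.1 _ ⟨⟨a, b, hab, rfl⟩, htw⟩)
    rw [← mul_swap_mul_self k j π] at hπab
    rcases hπab.of_mul_swap with h | ⟨-, h⟩ | ⟨h, -⟩
    · exact (absLe_swap_iff hab).2 h
    · exact absurd (h.eq_of_left hqj).symm hb
    · exact absurd (h.eq_of_right hqj) ha
  have hπq : π ≤ₜ q := hπ.2.2 q (absLe_trans (mul_swap_absLe hkj hk) hπ.1) hq
  have : ℓ q + 1 = ℓ π := absLength_mul_swap_of_sameCycle hkj hk
  unfold absLe at hπq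
  omega

end NCJoin

end PopTsack

section CycleMaxima
open Finset Equiv Equiv.Perm

variable {β : Type*} [Fintype β] [DecidableEq β] [LinearOrder β]

def Equiv.Perm.IsCycleMax (π : Perm β) (j : β) : Prop :=
  π j ≠ j ∧ ∀ y, π.SameCycle j y → y ≤ j

instance (π : Perm β) : DecidablePred π.IsCycleMax :=
  fun _ => inferInstanceAs (Decidable (_ ∧ _))

theorem Equiv.Perm.card_filter_isCycleMax (π : Perm β) :
    #{j | π.IsCycleMax j} = π.cycleFactorsFinset.card := by
  refine card_bij (fun j _ => π.cycleOf j) ?_ ?_ ?_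
  · intro j hj
    rw [mem_filter_univ] at hj
    exact cycleOf_mem_cycleFactorsFinset_iff.2 (mem_support.2 hj.1)
  · intro j hj j' hj' h
    rw [mem_filter_univ] at hj hj'
    have hsc := (sameCycle_iff_cycleOf_eq_of_mem_support (mem_support.2 hj.1)
      (mem_support.2 hj'.1)).2 h
    exact le_antisymm (hj'.2 j hsc.symm) (hj.2 j' hsc)
  · intro γ hγ
    obtain ⟨hcycle, hγπ⟩ := mem_cycleFactorsFinset_iff.1 hγ
    have hne : γ.support.Nonempty := by
      rw [nonempty_iff_ne_empty, Ne, support_eq_empty_iff]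
      exact hcycle.ne_one
    set m := γ.support.max' hne
    have hm : m ∈ γ.support := γ.support.max'_mem hne
    have hπm : π m ≠ m := by rw [← hγπ m hm]; exact mem_support.1 hm
    have hγm := cycle_is_cycleOf hm hγ
    refine ⟨m, (mem_filter_univ m).2 ⟨hπm, fun y hy => γ.support.le_max' y ?_⟩, hγm.symm⟩
    rwa [hγm, mem_support_cycleOf_iff' hπm]

end CycleMaxima

section Antiexceedances
open Finset Equiv Equiv.Perm
variable {n : ℕ}

theorem Equiv.Perm.aexc_mul_inv (w π : Perm (Fin n)) : (w * π⁻¹).aexc = #{j | w j < π j} := by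
  refine card_nbij' (w⁻¹ ·) (w ·) ?_ ?_ ?_ ?_ <;> intro <;> simp

theorem Equiv.Perm.lt_self_iff_lt_apply_or_isCycleMax {π w : Perm (Fin n)} {j : Fin n}
    (hnc : ∀ y, π.SameCycle j y → ¬ sbtw j y (π j)) (hw : π.SameCycle j (w j))
    (hfix : w j = j → π j = j) :
    (w j < j ↔ w j < π j ∨ π.IsCycleMax j) ∧ ¬ (w j < π j ∧ π.IsCycleMax j) := by
  by_cases hπj : π j = j
  · simp [hπj, (hw.eq_of_left hπj).symm, IsCycleMax]
  have hwj : w j ≠ j := mt hfix hπj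
  have hwπ := hnc _ hw
  rw [Fin.sbtw_iff] at hwπ
  by_cases hmax : ∀ y, π.SameCycle j y → y ≤ j
  · have := hmax _ hw
    have := hmax _ (SameCycle.refl π j).apply_right
    simp only [show π.IsCycleMax j from ⟨hπj, hmax⟩, or_true, and_true, iff_true]
    constructor <;> omega
  · push Not at hmax
    obtain ⟨y, hy, hjy⟩ := hmax
    have hyπ := hnc y hy
    rw [Fin.sbtw_iff] at hyπ
    have : ¬ π.IsCycleMax j := fun h => (h.2 y hy).not_gt hjy
    simp only [this, or_false, and_false, not_false_eq_true, and_true]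
    constructor <;> intro <;> omega

theorem Equiv.Perm.aexc_mul_inv_add_card_isCycleMax {w π : Perm (Fin n)}
    (hnc : ∀ x y, π.SameCycle x y → ¬ sbtw x y (π x)) (hw : ∀ j, π.SameCycle j (w j))
    (hfix : ∀ j, w j = j → π j = j) :
    (w * π⁻¹).aexc + #{j | π.IsCycleMax j} = w.aexc := by
  have key j := lt_self_iff_lt_apply_or_isCycleMax (hnc j) (hw j) (hfix j)
  have hw₁ : w.aexc = #{j | w j < j} := by convert aexc_mul_inv w 1 <;> simp
  rw [hw₁, aexc_mul_inv, ← card_union_of_disjoint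
    (disjoint_filter.2 fun j _ h₁ h₂ => (key j).2 ⟨h₁, h₂⟩), ← filter_or]
  simp only [(key _).1]

end Antiexceedances

theorem aexc_popTsack_typeA_general {n : ℕ} (w : Equiv.Perm (Fin n)) :
    Equiv.Perm.aexc (popT {t : Equiv.Perm (Fin n) | t.IsSwap} (finRotate n) w) +
      (piT {t : Equiv.Perm (Fin n) | t.IsSwap} (finRotate n) w).cycleFactorsFinset.card =
      Equiv.Perm.aexc w := by
  unfold popT piT
  split_ifs with hjoin
  · have hπ := hjoin.choose_spec
    rw [← Equiv.Perm.card_filter_isCycleMax]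
    exact Equiv.Perm.aexc_mul_inv_add_card_isCycleMax
      (fun _ _ => not_sbtw_of_absLe_finRotate hπ.1)
      (sameCycle_apply_of_forall_isSwap_absLe fun t ht htw => hπ.2.1 t ⟨ht, htw⟩)
      (fun _ => apply_eq_self_of_isNCJoin hπ)
  · simp

/-- Let `n ≥ 2` and let `S_n` be the symmetric group with Coxeter element
`c = (1 2 ⋯ n)`, reflections the transpositions.  For every `w`,
`aexc(Pop_T(w)) = aexc(w) - cyc_{>1}(π_T(w))`, where `cyc_{>1}` counts non-singleton cycles
(stated additively: `aexc(Pop_T(w)) + cyc_{>1}(π_T(w)) = aexc(w)`). -/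
theorem aexc_popTsack_typeA {n : ℕ} (hn : 2 ≤ n) (w : Equiv.Perm (Fin n)) :
    Equiv.Perm.aexc (popT {t : Equiv.Perm (Fin n) | t.IsSwap} (finRotate n) w) +
      (piT {t : Equiv.Perm (Fin n) | t.IsSwap} (finRotate n) w).cycleFactorsFinset.card =
      Equiv.Perm.aexc w :=
  aexc_popTsack_typeA_general w
end
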